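/- Let q ≥ 2 and let Γ be a finite weak generalized hexagon of order (q,q) (for example the split Cayley hexagon H(q)). Let S be a set of q^3+1 mutually opposite lines of Γ (any two distinct lines of S are at distance 6 in the incidence graph). Then every line of Γ either belongs to S or meets some line of S; equivalently, every line of Γ is at distance at most 2 in the incidence graph from some line of S. -/

import Mathlib

/-!
Count lines. The incidence graph is `(q+1)`-regular, so a sphere of radius `r+1` in it has at
most `(q+1) q^r` vertices; as the graph is bipartite of diameter 6, every line lies at distance
1, 3 or 5 from a fixed point, whence there are at most `(q+1)(1+q²+q⁴)` lines. Since there are no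
4-cycles, the lines sharing a point with a line `m` (with `m` itself) number exactly `1+(q+1)q`,
and for opposite lines these sets are disjoint. For `q³+1` mutually opposite lines they thus
cover `(q³+1)(1+q+q²) = (q+1)(1+q²+q⁴)` lines, i.e. all of them.
-/

/-- The incidence graph of a point-line geometry. -/
def IncidenceGraph {P L : Type*} (I : P → L → Prop) : SimpleGraph (P ⊕ L) where
  Adj x y :=
    (∃ p l, x = Sum.inl p ∧ y = Sum.inr l ∧ I p l) ∨
    (∃ p l, x = Sum.inr l ∧ y = Sum.inl p ∧ I p l)
  symm := by
    constructor
    rintro x y (⟨p, l, hx, hy, h⟩ | ⟨p, l, hx, hy, h⟩)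
    · exact Or.inr ⟨p, l, hy, hx, h⟩
    · exact Or.inl ⟨p, l, hy, hx, h⟩
  loopless := by
    constructor
    rintro x (⟨p, l, hx, hy, h⟩ | ⟨p, l, hx, hy, h⟩) <;> subst hx <;> simp_all

/-- A finite weak generalized hexagon: the incidence graph is connected, has girth
exactly 12, and has all pairwise distances at most 6. -/
def IsWeakGenHexagon {P L : Type*} (I : P → L → Prop) : Prop :=
  (IncidenceGraph I).Connected ∧ (IncidenceGraph I).girth = 12 ∧
    ∀ x y, (IncidenceGraph I).dist x y ≤ 6

/-- The geometry has order (s,t): every line is incident with exactly s+1 points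
and every point with exactly t+1 lines. -/
def HasOrder {P L : Type*} (I : P → L → Prop) (s t : ℕ) : Prop :=
  (∀ l, {p | I p l}.ncard = s + 1) ∧ (∀ p, {l | I p l}.ncard = t + 1)

open Set SimpleGraph Sum

namespace Set

variable {ι α : Type*}

lemma ncard_biUnion_le_ncard_mul {t : Set ι} (ht : t.Finite) (s : ι → Set α) {n : ℕ}
    (h : ∀ i ∈ t, (s i).ncard ≤ n) : (⋃ i ∈ t, s i).ncard ≤ t.ncard * n := by
  classical
  calc (⋃ i ∈ t, s i).ncard ≤ ∑ᶠ i ∈ t, (s i).ncard := ht.ncard_biUnion_le s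
    _ = ∑ i ∈ ht.toFinset, (s i).ncard := finsum_mem_eq_finite_toFinset_sum _ ht
    _ ≤ ht.toFinset.card • n := Finset.sum_le_card_nsmul _ _ _ (by simpa using h)
    _ = t.ncard * n := by rw [ncard_eq_toFinset_card t ht, smul_eq_mul]

lemma ncard_biUnion_eq_ncard_mul [Finite α] {t : Set ι} (ht : t.Finite) {s : ι → Set α}
    (hdisj : t.PairwiseDisjoint s) {n : ℕ} (h : ∀ i ∈ t, (s i).ncard = n) :
    (⋃ i ∈ t, s i).ncard = t.ncard * n := by
  classical
  calc (⋃ i ∈ t, s i).ncard = ∑ᶠ i ∈ t, (s i).ncard :=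
        ht.ncard_biUnion (fun _ _ ↦ toFinite _) hdisj
    _ = ∑ i ∈ ht.toFinset, (s i).ncard := finsum_mem_eq_finite_toFinset_sum _ ht
    _ = ht.toFinset.card * n := Finset.sum_const_nat (by simpa using h)
    _ = t.ncard * n := by rw [ncard_eq_toFinset_card t ht]

end Set

namespace SimpleGraph

variable {V : Type*} {G : SimpleGraph V}

lemma exists_adj_dist_eq_of_dist_eq_succ {x y : V} {n : ℕ} (h : G.dist x y = n + 1) :
    ∃ z, G.Adj z y ∧ G.dist x z = n := by
  obtain ⟨p, hp⟩ := exists_walk_of_dist_ne_zero (by omega : G.dist x y ≠ 0)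
  have hrev : p.reverse.length = n + 1 := by rw [Walk.length_reverse, hp, h]
  cases hw : p.reverse with
  | nil => simp [hw] at hrev
  | @cons _ z _ hyz w =>
    obtain ⟨u, hu⟩ := w.reverse.reachable.exists_walk_length_eq_dist
    have hwlen : w.length = n := by simpa [hw] using hrev
    have hupper : G.dist x z ≤ n := by simpa [hwlen] using dist_le w.reverse
    have hlower : n + 1 ≤ G.dist x z + 1 := by
      simpa [h, hu] using dist_le (u.concat hyz.symm)
    exact ⟨z, hyz.symm, by omega⟩

lemma girth_le_four_of_adj {a b c e : V} (hab : G.Adj a b) (hbc : G.Adj b c) (hce : G.Adj c e)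
    (hea : G.Adj e a) (hac : a ≠ c) (hbe : b ≠ e) : G.girth ≤ 4 := by
  have hcircuit : (Walk.cons hab (.cons hbc (.cons hce (.cons hea .nil)))).IsCircuit := by
    refine ⟨?_, by simp⟩
    simp [Walk.isTrail_def, hac, hbe, hac.symm, hab.ne, hbc.ne, hce.ne, hea.ne.symm]
  simpa using hcircuit.girth_le_length

variable [Finite V] {d : ℕ}

lemma ncard_setOf_dist_eq_add_two_le (hdeg : ∀ v, (G.neighborSet v).ncard ≤ d + 1) (x : V)
    (r : ℕ) : {y | G.dist x y = r + 2}.ncard ≤ d * {y | G.dist x y = r + 1}.ncard := by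
  have hcover : {y | G.dist x y = r + 2} ⊆
      ⋃ z ∈ {z | G.dist x z = r + 1}, G.neighborSet z ∩ {y | G.dist x y = r + 2} := by
    intro y hy
    obtain ⟨z, hzy, hz⟩ := exists_adj_dist_eq_of_dist_eq_succ hy
    exact mem_biUnion hz ⟨hzy, hy⟩
  have hfibre : ∀ z ∈ {z | G.dist x z = r + 1},
      (G.neighborSet z ∩ {y | G.dist x y = r + 2}).ncard ≤ d := by
    intro z hz
    obtain ⟨w, hwz, hw⟩ := exists_adj_dist_eq_of_dist_eq_succ hz
    have hsub : G.neighborSet z ∩ {y | G.dist x y = r + 2} ⊆ G.neighborSet z \ {w} :=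
      fun y ⟨hzy, hy⟩ ↦ ⟨hzy, fun hyw ↦ by simp_all⟩
    calc _ ≤ (G.neighborSet z \ {w}).ncard := ncard_le_ncard hsub
      _ = (G.neighborSet z).ncard - 1 := ncard_sdiff_singleton_of_mem hwz.symm
      _ ≤ d := by have := hdeg z; omega
  calc _ ≤ _ := ncard_le_ncard hcover
    _ ≤ _ := ncard_biUnion_le_ncard_mul (toFinite _) _ hfibre
    _ = _ := mul_comm _ _

lemma ncard_setOf_dist_eq_succ_le (hdeg : ∀ v, (G.neighborSet v).ncard ≤ d + 1) (x : V)
    (r : ℕ) : {y | G.dist x y = r + 1}.ncard ≤ (d + 1) * d ^ r := by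
  induction r with
  | zero => simpa [neighborSet] using hdeg x
  | succ r ih =>
    calc _ ≤ d * {y | G.dist x y = r + 1}.ncard := ncard_setOf_dist_eq_add_two_le hdeg x r
      _ ≤ d * ((d + 1) * d ^ r) := Nat.mul_le_mul_left d ih
      _ = (d + 1) * d ^ (r + 1) := by ring

end SimpleGraph

namespace IncidenceGraph

variable {P L : Type*} {I : P → L → Prop}

@[simp]
lemma adj_inl_inr {p : P} {l : L} : (IncidenceGraph I).Adj (inl p) (inr l) ↔ I p l := by
  simp [IncidenceGraph]

@[simp]
lemma adj_inr_inl {p : P} {l : L} : (IncidenceGraph I).Adj (inr l) (inl p) ↔ I p l := by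
  simp [IncidenceGraph]

@[simp]
lemma not_adj_inl_inl {p p' : P} : ¬(IncidenceGraph I).Adj (inl p) (inl p') := by
  simp [IncidenceGraph]

@[simp]
lemma not_adj_inr_inr {l l' : L} : ¬(IncidenceGraph I).Adj (inr l) (inr l') := by
  simp [IncidenceGraph]

lemma neighborSet_inl (p : P) : (IncidenceGraph I).neighborSet (inl p) = inr '' {l | I p l} := by
  ext (_ | _) <;> simp

lemma neighborSet_inr (l : L) : (IncidenceGraph I).neighborSet (inr l) = inl '' {p | I p l} := by
  ext (_ | _) <;> simp

lemma ncard_neighborSet {q : ℕ} (hord : HasOrder I q q) (v : P ⊕ L) :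
    ((IncidenceGraph I).neighborSet v).ncard = q + 1 := by
  cases v with
  | inl p => rw [neighborSet_inl, ncard_image_of_injective _ inr_injective, hord.2]
  | inr l => rw [neighborSet_inr, ncard_image_of_injective _ inl_injective, hord.1]

def sideColoring : (IncidenceGraph I).Coloring Bool :=
  Coloring.mk Sum.isRight <| by rintro (_ | _) (_ | _) h <;> simp_all

lemma odd_dist_inl_inr (hconn : (IncidenceGraph I).Connected) (p : P) (l : L) :
    Odd ((IncidenceGraph I).dist (inl p) (inr l)) := by
  obtain ⟨w, hw⟩ := hconn.exists_walk_length_eq_dist (inl p) (inr l)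
  rw [← hw, sideColoring.odd_length_iff_not_congr]
  exact iff_of_true Bool.false_ne_true rfl

lemma eq_of_incident_of_incident (hg : 4 < (IncidenceGraph I).girth) {p p' : P} {m n : L}
    (hpm : I p m) (hp'm : I p' m) (hpn : I p n) (hp'n : I p' n) (hpp' : p ≠ p') : m = n := by
  by_contra hmn
  have := girth_le_four_of_adj (adj_inl_inr.mpr hpm) (adj_inr_inl.mpr hp'm)
    (adj_inl_inr.mpr hp'n) (adj_inr_inl.mpr hpn) (by simpa using hpp') (by simpa using hmn)
  omega

end IncidenceGraph

section Hexagon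

open IncidenceGraph

variable {P L : Type*} {I : P → L → Prop}

lemma card_lines_le [Finite P] [Finite L] (hconn : (IncidenceGraph I).Connected)
    (hdiam : ∀ x y, (IncidenceGraph I).dist x y ≤ 6) {q : ℕ} (hord : HasOrder I q q)
    (p₀ : P) : Nat.card L ≤ (q + 1) * (1 + q ^ 2 + q ^ 4) := by
  let sphere (r : ℕ) : Set (P ⊕ L) := {y | (IncidenceGraph I).dist (inl p₀) y = r}
  have hlines : range (inr : L → P ⊕ L) ⊆ sphere 1 ∪ sphere 3 ∪ sphere 5 := by
    rintro _ ⟨l, rfl⟩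
    obtain ⟨k, hk⟩ := odd_dist_inl_inr hconn p₀ l
    have := hdiam (inl p₀) (inr l)
    simp only [sphere, mem_union, mem_ofPred_eq]
    omega
  have hsphere (r : ℕ) : (sphere (r + 1)).ncard ≤ (q + 1) * q ^ r :=
    ncard_setOf_dist_eq_succ_le (fun v ↦ (ncard_neighborSet hord v).le) (inl p₀) r
  calc Nat.card L = (range (inr : L → P ⊕ L)).ncard :=
        (ncard_range_of_injective inr_injective).symm
    _ ≤ (sphere 1 ∪ sphere 3 ∪ sphere 5).ncard := ncard_le_ncard hlines
    _ ≤ (sphere 1).ncard + (sphere 3).ncard + (sphere 5).ncard :=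
      (ncard_union_le _ _).trans (Nat.add_le_add_right (ncard_union_le _ _) _)
    _ ≤ (q + 1) * q ^ 0 + (q + 1) * q ^ 2 + (q + 1) * q ^ 4 :=
      Nat.add_le_add (Nat.add_le_add (hsphere 0) (hsphere 2)) (hsphere 4)
    _ = (q + 1) * (1 + q ^ 2 + q ^ 4) := by ring

variable (I) in
/-- `m^⊥` in the notation of generalized polygons. -/
def linePerp (m : L) : Set L := {n | ∃ p, I p m ∧ I p n}

lemma ncard_linePerp [Finite P] [Finite L] (hg : 4 < (IncidenceGraph I).girth) {s t : ℕ}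
    (hord : HasOrder I s t) (m : L) : (linePerp I m).ncard = 1 + (s + 1) * t := by
  have hdecomp : linePerp I m = insert m (⋃ p ∈ {p | I p m}, {n | I p n} \ {m}) := by
    ext n
    constructor
    · rintro ⟨p, hpm, hpn⟩
      by_cases hnm : n = m
      · exact Or.inl hnm
      · exact Or.inr (mem_biUnion hpm ⟨hpn, hnm⟩)
    · rintro (rfl | hn)
      · obtain ⟨p, hp⟩ := nonempty_of_ncard_ne_zero (s := {p | I p n}) (by rw [hord.1]; omega)
        exact ⟨p, hp, hp⟩
      · obtain ⟨p, hpm, hpn, -⟩ := mem_iUnion₂.mp hn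
        exact ⟨p, hpm, hpn⟩
  have hdisj : {p | I p m}.PairwiseDisjoint (fun p ↦ {n | I p n} \ {m}) :=
    fun p hp p' hp' hpp' ↦ disjoint_left.mpr fun n hn hn' ↦
      hn.2 (eq_of_incident_of_incident hg hp hp' hn.1 hn'.1 hpp').symm
  have hfibre : ∀ p ∈ {p | I p m}, ({n | I p n} \ {m}).ncard = t := fun p hp ↦ by
    rw [ncard_sdiff_singleton_of_mem (show m ∈ {n | I p n} from hp), hord.2]; rfl
  rw [hdecomp, ncard_insert_of_notMem (by simp), ncard_biUnion_eq_ncard_mul (toFinite _) hdisj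
    hfibre, hord.1, add_comm]

lemma dist_le_four_of_mem_linePerp {m m' n : L} (hm : n ∈ linePerp I m)
    (hm' : n ∈ linePerp I m') : (IncidenceGraph I).dist (inr m) (inr m') ≤ 4 := by
  obtain ⟨p, hpm, hpn⟩ := hm
  obtain ⟨p', hp'm', hp'n⟩ := hm'
  simpa using dist_le (.cons (adj_inr_inl.mpr hpm) (.cons (adj_inl_inr.mpr hpn)
    (.cons (adj_inr_inl.mpr hp'n) (.cons (adj_inl_inr.mpr hp'm') .nil))))

end Hexagon

theorem spread_blocks_lines_general
    {P L : Type} [Fintype P] [Fintype L] (I : P → L → Prop) (q : ℕ)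
    (hΓ : IsWeakGenHexagon I) (hord : HasOrder I q q)
    (S : Set L) (hcard : S.ncard = q ^ 3 + 1)
    (hopp : ∀ l ∈ S, ∀ m ∈ S, l ≠ m →
      (IncidenceGraph I).dist (Sum.inr l) (Sum.inr m) = 6) :
    ∀ l : L, l ∈ S ∨ ∃ m ∈ S, m ≠ l ∧ ∃ p : P, I p l ∧ I p m := by
  obtain ⟨hconn, hgirth, hdiam⟩ := hΓ
  intro l
  obtain ⟨p₀, -⟩ := nonempty_of_ncard_ne_zero (s := {p | I p l}) (by rw [hord.1]; omega)
  have hdisj : S.PairwiseDisjoint (linePerp I) := fun m hm m' hm' hmm' ↦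
    disjoint_left.mpr fun _ hn hn' ↦ by
      have := dist_le_four_of_mem_linePerp hn hn'
      rw [hopp m hm m' hm' hmm'] at this
      omega
  have hcover : ⋃ m ∈ S, linePerp I m = univ := by
    refine eq_of_subset_of_ncard_le (subset_univ _) ?_ (toFinite _)
    rw [ncard_univ, ncard_biUnion_eq_ncard_mul (toFinite S) hdisj
      (fun m _ ↦ ncard_linePerp (by rw [hgirth]; norm_num) hord m), hcard]
    calc Nat.card L ≤ (q + 1) * (1 + q ^ 2 + q ^ 4) := card_lines_le hconn hdiam hord p₀
      _ = (q ^ 3 + 1) * (1 + (q + 1) * q) := by ring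
  obtain ⟨m, hm, p, hpm, hpl⟩ := mem_iUnion₂.mp (hcover ▸ mem_univ l)
  rcases eq_or_ne m l with rfl | hml
  · exact Or.inl hm
  · exact Or.inr ⟨m, hm, hml, p, hpl, hpm⟩

/-- In a finite weak generalized hexagon of order (q,q) with q ≥ 2
(e.g. the split Cayley hexagon H(q)), given a set S of q³+1 mutually opposite
lines, every line of the hexagon either belongs to S or meets some line of S. -/
theorem spread_blocks_lines
    {P L : Type} [Fintype P] [Fintype L] (I : P → L → Prop) (q : ℕ) (hq : 2 ≤ q)
    (hΓ : IsWeakGenHexagon I) (hord : HasOrder I q q)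
    (S : Set L) (hcard : S.ncard = q ^ 3 + 1)
    (hopp : ∀ l ∈ S, ∀ m ∈ S, l ≠ m →
      (IncidenceGraph I).dist (Sum.inr l) (Sum.inr m) = 6) :
    ∀ l : L, l ∈ S ∨ ∃ m ∈ S, m ≠ l ∧ ∃ p : P, I p l ∧ I p m :=
  spread_blocks_lines_general I q hΓ hord S hcard hopp
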